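/- Let N ≥ 1, M > 0, x, y ∈ ℝ^N with all components in [0, M], let 0 < δ < M, let F : K_x → K_y satisfy |d²(p,q) − d²(F(p), F(q))| ≤ 2δ for all p, q ∈ K_x, and let σ : {1,…,N} → {1,…,N} satisfy F(□(n)) ⊆ □(σ(n)) for all n. Then σ is injective (hence bijective). -/

import Mathlib

noncomputable def box (M : ℝ) (n : ℕ) : Set (ℝ × ℝ) :=
  Set.Icc (4 * M + 10 * M * (n : ℝ)) (4 * M + 10 * M * (n : ℝ) + 2 * M) ×ˢ Set.Icc (-M) M

noncomputable def pp {N : ℕ} (M : ℝ) (z : Fin N → ℝ) (n : Fin N) : ℝ × ℝ :=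
  (10 * M * ((n : ℕ) : ℝ), z n)

noncomputable def pm {N : ℕ} (M : ℝ) (z : Fin N → ℝ) (n : Fin N) : ℝ × ℝ :=
  (10 * M * ((n : ℕ) : ℝ), -(z n))

noncomputable def Kset {N : ℕ} (M : ℝ) (z : Fin N → ℝ) : Set (ℝ × ℝ) :=
  ⋃ n : Fin N, ({pp M z n, pm M z n} ∪ box M n)

theorem pp_mem {N : ℕ} (M : ℝ) (z : Fin N → ℝ) (n : Fin N) : pp M z n ∈ Kset M z :=
  Set.mem_iUnion.mpr ⟨n, Or.inl (Set.mem_insert _ _)⟩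

theorem pm_mem {N : ℕ} (M : ℝ) (z : Fin N → ℝ) (n : Fin N) : pm M z n ∈ Kset M z :=
  Set.mem_iUnion.mpr ⟨n, Or.inl (Set.mem_insert_of_mem _ rfl)⟩

theorem Kset_compact {N : ℕ} (M : ℝ) (z : Fin N → ℝ) : IsCompact (Kset M z) := by
  apply isCompact_iUnion
  intro n
  exact ((Set.toFinite _).isCompact).union (isCompact_Icc.prod isCompact_Icc)

instance {N : ℕ} (M : ℝ) (z : Fin N → ℝ) : CompactSpace ↥(Kset M z) :=
  isCompact_iff_compactSpace.mp (Kset_compact M z)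

theorem Kset_nonempty {N : ℕ} (hN : 0 < N) (M : ℝ) (z : Fin N → ℝ) : (Kset M z).Nonempty :=
  ⟨pp M z ⟨0, hN⟩, pp_mem M z ⟨0, hN⟩⟩

/-!
Pick the centres of two distinct squares □(n) ≠ □(m): they are at least `10M` apart, while a
single square has diameter `2M`. If `σ n = σ m`, both centres land in the same square, so the
distortion of `F` would be at least `8M > 2δ`.
-/

theorem box_subset_Kset {N : ℕ} (M : ℝ) (z : Fin N → ℝ) (n : Fin N) : box M n ⊆ Kset M z :=
  fun _ hp => Set.mem_iUnion.mpr ⟨n, Or.inr hp⟩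

theorem dist_le_of_mem_box {M : ℝ} {k : ℕ} {a b : ℝ × ℝ} (ha : a ∈ box M k) (hb : b ∈ box M k) :
    dist a b ≤ 2 * M := by
  rw [Prod.dist_eq]
  refine max_le ?_ ?_
  · linarith [Real.dist_le_of_mem_Icc ha.1 hb.1]
  · linarith [Real.dist_le_of_mem_Icc ha.2 hb.2]

noncomputable def boxCenter (M : ℝ) (k : ℕ) : ℝ × ℝ :=
  (4 * M + 10 * M * (k : ℝ) + M, 0)

theorem boxCenter_mem_box {M : ℝ} (hM : 0 ≤ M) (k : ℕ) : boxCenter M k ∈ box M k := by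
  refine ⟨⟨?_, ?_⟩, ⟨?_, ?_⟩⟩ <;> simp only [boxCenter] <;> linarith

theorem le_dist_boxCenter {M : ℝ} (hM : 0 ≤ M) {k l : ℕ} (hkl : k ≠ l) :
    10 * M ≤ dist (boxCenter M k) (boxCenter M l) := by
  have hsep : (1 : ℝ) ≤ |(k : ℝ) - l| := by
    rcases Nat.lt_or_gt_of_ne hkl with h | h
    · have : (k : ℝ) + 1 ≤ l := by exact_mod_cast h
      exact le_abs.mpr (Or.inr (by linarith))
    · have : (l : ℝ) + 1 ≤ k := by exact_mod_cast h
      exact le_abs.mpr (Or.inl (by linarith))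
  calc 10 * M ≤ 10 * M * |(k : ℝ) - l| := le_mul_of_one_le_right (by linarith) hsep
    _ = dist (boxCenter M k).1 (boxCenter M l).1 := by
      rw [Real.dist_eq, boxCenter, boxCenter,
        show 4 * M + 10 * M * k + M - (4 * M + 10 * M * l + M) = 10 * M * (k - l) by ring,
        abs_mul, abs_of_nonneg (by linarith : 0 ≤ 10 * M)]
    _ ≤ dist (boxCenter M k) (boxCenter M l) := le_max_left _ _

theorem step2_sigma_injective_general {N : ℕ} {M : ℝ} (hM : 0 < M)
    (x y : Fin N → ℝ)
    {δ : ℝ} (hδM : δ < M)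
    (F : ↥(Kset M x) → ↥(Kset M y))
    (hF : ∀ p q : ↥(Kset M x), |dist p q - dist (F p) (F q)| ≤ 2 * δ)
    (σ : Fin N → Fin N)
    (hσ : ∀ n : Fin N, ∀ p : ↥(Kset M x),
      (p : ℝ × ℝ) ∈ box M n → (F p : ℝ × ℝ) ∈ box M (σ n)) :
    Function.Injective σ := by
  intro n m hnm
  by_contra hne
  have hn := boxCenter_mem_box hM.le n
  have hm := boxCenter_mem_box hM.le m
  let P : ↥(Kset M x) := ⟨boxCenter M n, box_subset_Kset M x n hn⟩
  let Q : ↥(Kset M x) := ⟨boxCenter M m, box_subset_Kset M x m hm⟩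
  have hPQ : 10 * M ≤ dist P Q := le_dist_boxCenter hM.le (Fin.val_injective.ne hne)
  have hFPQ : dist (F P) (F Q) ≤ 2 * M :=
    dist_le_of_mem_box (hσ n P hn) (hnm ▸ hσ m Q hm)
  linarith [(abs_sub_le_iff.mp (hF P Q)).1]

/-- Step 2: the square-index map σ is injective (hence bijective). -/
theorem step2_sigma_injective {N : ℕ} (hN : 0 < N) {M : ℝ} (hM : 0 < M)
    (x y : Fin N → ℝ) (hx : ∀ n, x n ∈ Set.Icc (0 : ℝ) M) (hy : ∀ n, y n ∈ Set.Icc (0 : ℝ) M)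
    {δ : ℝ} (hδ0 : 0 < δ) (hδM : δ < M)
    (F : ↥(Kset M x) → ↥(Kset M y))
    (hF : ∀ p q : ↥(Kset M x), |dist p q - dist (F p) (F q)| ≤ 2 * δ)
    (σ : Fin N → Fin N)
    (hσ : ∀ n : Fin N, ∀ p : ↥(Kset M x),
      (p : ℝ × ℝ) ∈ box M n → (F p : ℝ × ℝ) ∈ box M (σ n)) :
    Function.Injective σ :=
  step2_sigma_injective_general hM x y hδM F hF σ hσ
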